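/- arXiv:2509.04004 — 2 statements merged into one kernel-verified Lean document; each statement's English description precedes it below -/
import Mathlib

section
/- Consider k ≥ 2 distinct points on the unit circle, with clockwise angular gaps forming a sequence with pairwise distinct cyclic rotations (rotationally asymmetric configuration). Adding one new point at an empty location, if the resulting configuration is still rotationally asymmetric, then the true leader of the new configuration lies in the closed clockwise arc from the old true leader to the new point. -/
open Real
open scoped Classical

noncomputable section

/-- Clockwise angular distance from `p` to `q`, a real number in `[0, 2π)`. -/
def cw (p q : Real.Angle) : ℝ :=
  if 0 ≤ (q - p).toReal then (q - p).toReal else (q - p).toReal + 2 * π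

/-- The sorted list of clockwise distances from `p` to the points of `S`. -/
def dists (S : Finset Real.Angle) (p : Real.Angle) : List ℝ :=
  (S.image (cw p)).sort (· ≤ ·)

/-- The clockwise angular-gap sequence of `p` with respect to the configuration `S`:
the sequence of clockwise gaps between consecutive points, starting from `p`. -/
def gapSeq (S : Finset Real.Angle) (p : Real.Angle) : List ℝ :=
  List.zipWith (fun a b => a - b) ((dists S p).tail ++ [2 * π]) (dists S p)

/-- Lexicographic strict order on lists of reals. -/
def lexLt (a b : List ℝ) : Prop := List.Lex (· < ·) a b

/-- `L` is the true leader of `S`: its angular-gap sequence is lexicographically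
strictly smallest. -/
def TrueLeader (S : Finset Real.Angle) (L : Real.Angle) : Prop :=
  L ∈ S ∧ ∀ r ∈ S, r ≠ L → lexLt (gapSeq S L) (gapSeq S r)

/-- `S` is rotationally asymmetric: no nontrivial rotation about the center fixes `S`. -/
def RotAsym (S : Finset Real.Angle) : Prop :=
  ∀ θ : Real.Angle, θ ≠ 0 → S.image (· + θ) ≠ S

/-- The antipodal position of a point on the circle. -/
def antipode (p : Real.Angle) : Real.Angle := p + (π : Real.Angle)

/-- The hypothetical configuration in which the antipode of `r` is unoccupied. -/
def C0 (S : Finset Real.Angle) (r : Real.Angle) : Finset Real.Angle := S.erase (antipode r)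

/-- The hypothetical configuration in which the antipode of `r` is occupied. -/
def C1 (S : Finset Real.Angle) (r : Real.Angle) : Finset Real.Angle := insert (antipode r) S

/-- `r` is an undecided leader: both hypothetical configurations are rotationally
asymmetric and `r` is the true leader of exactly one of them. -/
def Undecided (S : Finset Real.Angle) (r : Real.Angle) : Prop :=
  r ∈ S ∧ RotAsym (C0 S r) ∧ RotAsym (C1 S r) ∧
    Xor' (TrueLeader (C0 S r) r) (TrueLeader (C1 S r) r)

/-- `r` is a cognizant leader: `r` is the true leader in every consistent
(hypothetical) configuration. -/
def Cognizant (S : Finset Real.Angle) (r : Real.Angle) : Prop :=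
  r ∈ S ∧ (RotAsym (C0 S r) → TrueLeader (C0 S r) r) ∧
    (RotAsym (C1 S r) → TrueLeader (C1 S r) r)

/-- An expected leader is a cognizant leader or an undecided leader. -/
def ExpectedLeader (S : Finset Real.Angle) (r : Real.Angle) : Prop :=
  Cognizant S r ∨ Undecided S r

/-!
The gaps of a point are the consecutive differences of its sorted list of clockwise distances,
which starts with `0` for every point, so gap sequences compare lexicographically exactly as
distance lists do. Suppose the new leader `L' ≠ L` had `q` strictly before it as seen from `L`.
Then `q` is at distance `cw L q` from `L` and at the larger distance
`cw L q - cw L L' + 2π` from `L'`; inserting a smaller fresh value into the lexicographically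
smaller distance list keeps it smaller, so `L` would still beat `L'` after `q` is added.
-/

namespace CircleLeader

section Gaps

variable {α : Type*}

/-- `gapSeq S p` is `gaps (2 * π) (dists S p)`. -/
def gaps [Sub α] (T : α) (D : List α) : List α :=
  List.zipWith (fun a b => a - b) (D.tail ++ [T]) D

variable [AddCommGroup α] [LinearOrder α] [IsOrderedAddMonoid α]

lemma lex_gaps_of_lex (T : α) :
    ∀ {A B : List α}, A.length = B.length → A.head? = B.head? →
      List.Lex (· < ·) A B → List.Lex (· < ·) (gaps T A) (gaps T B)
  | [], [], _, _, h => nomatch h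
  | a :: A, b :: B, hlen, hhd, h => by
    obtain rfl : a = b := by simpa using hhd
    cases h with
    | rel hr => exact absurd hr (lt_irrefl a)
    | cons hAB =>
      cases A with
      | nil => cases B with
        | nil => cases hAB
        | cons => simp at hlen
      | cons a₁ A => cases B with
        | nil => simp at hlen
        | cons b₁ B => cases hAB with
          | rel hr => exact .rel (sub_lt_sub_right hr a)
          | cons hAB =>
            show List.Lex _ ((a₁ - a) :: gaps T (a₁ :: A)) ((a₁ - a) :: gaps T (a₁ :: B))
            exact .cons (lex_gaps_of_lex T (by simpa using hlen) rfl (.cons hAB))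

lemma lex_gaps_iff (T : α) {A B : List α} (hlen : A.length = B.length)
    (hhd : A.head? = B.head?) :
    List.Lex (· < ·) (gaps T A) (gaps T B) ↔ List.Lex (· < ·) A B := by
  refine ⟨fun h => ?_, lex_gaps_of_lex T hlen hhd⟩
  rcases trichotomous_of (List.Lex (· < ·)) A B with hAB | rfl | hBA
  · exact hAB
  · exact absurd h (irrefl _)
  · exact absurd (lex_gaps_of_lex T hlen.symm hhd.symm hBA) (asymm h)

end Gaps

lemma lex_orderedInsert {α : Type*} [LinearOrder α] {x y : α} (hxy : x < y) :
    ∀ {A B : List α}, A.length = B.length → x ∉ A → List.Lex (· < ·) A B →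
      List.Lex (· < ·) (A.orderedInsert (· ≤ ·) x) (B.orderedInsert (· ≤ ·) y)
  | [], [], _, _, h => nomatch h
  | a :: A, b :: B, hlen, hxA, h => by
    simp only [List.orderedInsert]
    cases h with
    | rel hab =>
      split_ifs with hxa hyb hyb
      · exact .rel hxy
      · exact .rel (hxa.trans_lt hab)
      · exact .rel ((not_le.mp hxa).trans hxy)
      · exact .rel hab
    | cons hAB =>
      have hxa : x ≠ a := fun h => hxA (h ▸ List.mem_cons_self)
      split_ifs with hxa' hya hya
      · exact .rel hxy
      · exact .rel (lt_of_le_of_ne hxa' hxa)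
      · exact absurd (hya.trans (le_of_not_ge hxa')) (not_le.mpr hxy)
      · exact .cons (lex_orderedInsert hxy (by simpa using hlen)
          (fun h => hxA (List.mem_cons_of_mem a h)) hAB)

lemma cw_nonneg (p q : Real.Angle) : 0 ≤ cw p q := by
  unfold cw
  split_ifs with h
  · exact h
  · linarith [Real.Angle.neg_pi_lt_toReal (q - p), Real.pi_pos]

lemma cw_lt_two_pi (p q : Real.Angle) : cw p q < 2 * π := by
  unfold cw
  split_ifs with h
  · linarith [Real.Angle.toReal_le_pi (q - p), Real.pi_pos]
  · linarith

lemma coe_cw (p q : Real.Angle) : (cw p q : Real.Angle) = q - p := by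
  unfold cw
  split_ifs
  · exact Real.Angle.coe_toReal _
  · rw [Real.Angle.coe_add, Real.Angle.coe_two_pi, add_zero, Real.Angle.coe_toReal]

lemma cw_self (p : Real.Angle) : cw p p = 0 := by
  simp [cw]

lemma cw_injective (p : Real.Angle) : Function.Injective (cw p) := fun a b hab =>
  sub_left_injective ((coe_cw p a).symm.trans ((congrArg _ hab).trans (coe_cw p b)))

lemma cw_eq_of_coe_eq {p q : Real.Angle} {x : ℝ} (hx₀ : 0 ≤ x) (hx : x < 2 * π)
    (h : (x : Real.Angle) = q - p) : cw p q = x := by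
  have : Fact (0 < 2 * π) := ⟨Real.two_pi_pos⟩
  have hmem : ∀ {y : ℝ}, 0 ≤ y → y < 2 * π → y ∈ Set.Ico 0 (0 + 2 * π) := fun h₀ h₁ =>
    ⟨h₀, by rwa [zero_add]⟩
  exact (AddCircle.coe_eq_coe_iff_of_mem_Ico (hmem (cw_nonneg p q) (cw_lt_two_pi p q))
    (hmem hx₀ hx)).mp ((coe_cw p q).trans h.symm)

lemma cw_eq_of_cw_lt_cw {p q r : Real.Angle} (h : cw p q < cw p r) :
    cw r q = cw p q - cw p r + 2 * π := by
  refine cw_eq_of_coe_eq (by linarith [cw_lt_two_pi p r, cw_nonneg p q]) (by linarith) ?_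
  rw [Real.Angle.coe_add, Real.Angle.coe_two_pi, add_zero, Real.Angle.coe_sub, coe_cw, coe_cw]
  abel

lemma cw_lt_cw_of_cw_lt_cw {p q r : Real.Angle} (h : cw p q < cw p r) : cw p q < cw r q := by
  rw [cw_eq_of_cw_lt_cw h]
  linarith [cw_lt_two_pi p r]

lemma length_dists (S : Finset Real.Angle) (p : Real.Angle) : (dists S p).length = S.card := by
  rw [dists, Finset.length_sort, Finset.card_image_of_injective _ (cw_injective p)]

lemma head?_dists {S : Finset Real.Angle} {p : Real.Angle} (hp : p ∈ S) :
    (dists S p).head? = some 0 := by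
  have hsorted : (dists S p).Pairwise (· ≤ ·) := Finset.pairwise_sort _ _
  have hmem : ∀ {a}, a ∈ dists S p ↔ ∃ r ∈ S, cw p r = a := by simp [dists]
  have h0 : (0 : ℝ) ∈ dists S p := hmem.mpr ⟨p, hp, cw_self p⟩
  obtain ⟨c, t, hct⟩ := List.exists_cons_of_ne_nil (List.ne_nil_of_mem h0)
  rw [hct] at hsorted h0 ⊢
  have hc : 0 ≤ c := by
    obtain ⟨r, -, rfl⟩ := hmem.mp (hct ▸ List.mem_cons_self)
    exact cw_nonneg p r
  have hc' : c ≤ 0 := by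
    rcases List.mem_cons.mp h0 with h | h
    · exact h.ge
    · exact List.rel_of_pairwise_cons hsorted h
  rw [List.head?_cons, le_antisymm hc' hc]

lemma lexLt_gapSeq_iff {S : Finset Real.Angle} {p r : Real.Angle} (hp : p ∈ S) (hr : r ∈ S) :
    lexLt (gapSeq S p) (gapSeq S r) ↔ List.Lex (· < ·) (dists S p) (dists S r) :=
  lex_gaps_iff (2 * π) (by rw [length_dists, length_dists])
    (by rw [head?_dists hp, head?_dists hr])

lemma dists_insert {S : Finset Real.Angle} {q : Real.Angle} (hq : q ∉ S) (p : Real.Angle) :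
    dists (insert q S) p = (dists S p).orderedInsert (· ≤ ·) (cw p q) := by
  have hfresh : cw p q ∉ S.image (cw p) := by
    rw [Finset.mem_image]
    rintro ⟨r, hr, hrq⟩
    exact hq (cw_injective p hrq ▸ hr)
  refine List.Perm.eq_of_pairwise' (Finset.pairwise_sort _ _)
    ((Finset.pairwise_sort _ _).orderedInsert _ _) ?_
  rw [dists, Finset.image_insert]
  exact (Finset.sort_perm_toList _ _).trans ((Finset.toList_insert hfresh).trans
    ((Finset.sort_perm_toList _ _).symm.cons _)) |>.trans (List.perm_orderedInsert _ _ _).symm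

lemma lex_dists_insert {S : Finset Real.Angle} {p r q : Real.Angle} (hq : q ∉ S)
    (hpr : cw p q < cw r q) (h : List.Lex (· < ·) (dists S p) (dists S r)) :
    List.Lex (· < ·) (dists (insert q S) p) (dists (insert q S) r) := by
  rw [dists_insert hq, dists_insert hq]
  refine lex_orderedInsert hpr (by rw [length_dists, length_dists]) ?_ h
  simp only [dists, Finset.mem_sort, Finset.mem_image, not_exists, not_and]
  exact fun s hs hsq => hq (cw_injective p hsq ▸ hs)

end CircleLeader

open CircleLeader in
theorem stmt5_general (S : Finset Real.Angle)
    (L : Real.Angle) (hL : TrueLeader S L)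
    (q : Real.Angle) (hq : q ∉ S)
    (L' : Real.Angle) (hL' : TrueLeader (insert q S) L') :
    cw L L' ≤ cw L q := by
  by_contra! hqL'
  obtain ⟨hLS, hLlead⟩ := hL
  rcases Finset.mem_insert.mp hL'.1 with rfl | hL'S
  · exact lt_irrefl _ hqL'
  have hL'L : L' ≠ L := by
    rintro rfl
    exact (cw_nonneg L' q).not_gt (cw_self L' ▸ hqL')
  have hLS' : L ∈ insert q S := Finset.mem_insert_of_mem hLS
  have hold : List.Lex (· < ·) (dists S L) (dists S L') :=
    (lexLt_gapSeq_iff hLS hL'S).mp (hLlead L' hL'S hL'L)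
  have hnew : lexLt (gapSeq (insert q S) L) (gapSeq (insert q S) L') :=
    (lexLt_gapSeq_iff hLS' hL'.1).mpr (lex_dists_insert hq (cw_lt_cw_of_cw_lt_cw hqL') hold)
  exact asymm_of (List.Lex (· < ·)) hnew (hL'.2 L hLS' hL'L.symm)

theorem stmt5 (S : Finset Real.Angle) (h2 : 2 ≤ S.card) (hasym : RotAsym S)
    (L : Real.Angle) (hL : TrueLeader S L)
    (q : Real.Angle) (hq : q ∉ S) (hasym' : RotAsym (insert q S))
    (L' : Real.Angle) (hL' : TrueLeader (insert q S) L') :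
    cw L L' ≤ cw L q :=
  stmt5_general S L hL q hq L' hL'
end
end

section
/- Let C be a rotationally asymmetric finite configuration of points on a circle with no multiplicity, with true leader L. For a point r of C, let C₀(r) = C \ {antipode of r} and C₁(r) = C ∪ {antipode of r}. If r ≠ L is such that both C₀(r) and C₁(r) are rotationally asymmetric and r is the true leader of exactly one of them, then r is the true leader of C₀(r) and not of C₁(r); i.e., a non-leader point can be an 'undecided leader' only when its antipodal position on the circle is occupied in C₁ considerations, never by being leader only in the configuration with the antipode added. -/
open Real
open scoped Classical

noncomputable section

/-!
Gap sequences compare lexicographically like their partial sums, the sorted clockwise distances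
to the other points; for sorted lists of equal length this means that the smallest distance at
which two points see different occupancy is occupied as seen from the smaller one.

If the antipode `r + π` lies in `S`, then `C₁(r) = S` is led by `L`, not by `r`. Otherwise let
`T = S ∪ {r + π}` and suppose `r` leads `T`. Since `L` leads `S = T \ {r + π}`, erasing the
antipode reverses the comparison of `r` and `L`, which forces `r` and `L` to agree on all
distances below `π` and `t = cw L r < π`. The first disagreement of `r` and `L` then lies at
distance `≥ t`, and shifting it by `t` shows that the point `r + t` of `T` precedes `r`, a
contradiction. So `r` never leads `C₁(r)`, and exclusive-or forces `C₀(r)`.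
-/

open Finset

section LexPrecedes

variable {α : Type*} [LinearOrder α]

def AgreeBelow (A B : Finset α) (t : α) : Prop :=
  ∀ y < t, (y ∈ A ↔ y ∈ B)

/-- For sets of equal size, the lexicographic order of their increasing enumerations: the least
element of `A ∆ B` lies in `A`. -/
def LexPrecedes (A B : Finset α) : Prop :=
  ∃ z ∈ A, z ∉ B ∧ AgreeBelow A B z

theorem AgreeBelow.mono {A B : Finset α} {s t : α} (h : AgreeBelow A B t) (hst : s ≤ t) :
    AgreeBelow A B s :=
  fun y hy => h y (hy.trans_le hst)

theorem LexPrecedes.irrefl (A : Finset α) : ¬ LexPrecedes A A :=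
  fun ⟨_, hz, hz', _⟩ => hz' hz

theorem LexPrecedes.not_lexPrecedes {A B : Finset α} (hAB : LexPrecedes A B) :
    ¬ LexPrecedes B A := by
  rintro ⟨w, hwB, hwA, hw⟩
  obtain ⟨z, hzA, hzB, hz⟩ := hAB
  rcases lt_trichotomy z w with h | rfl | h
  · exact hzB ((hw z h).mpr hzA)
  · exact hzB hwB
  · exact hwA ((hz w h).mpr hwB)

theorem List.exists_first_diff_of_lex {l₁ l₂ : List α} (h : List.Lex (· < ·) l₁ l₂)
    (h₁ : l₁.Pairwise (· < ·)) (h₂ : l₂.Pairwise (· < ·)) (hlen : l₁.length = l₂.length) :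
    ∃ z ∈ l₁, z ∉ l₂ ∧ ∀ y < z, (y ∈ l₁ ↔ y ∈ l₂) := by
  induction h with
  | nil => simp at hlen
  | @cons a l₁ l₂ _ ih =>
    rw [List.pairwise_cons] at h₁ h₂
    obtain ⟨z, hz₁, hz₂, hz⟩ := ih h₁.2 h₂.2 (by simpa using hlen)
    have haz : a < z := h₁.1 z hz₁
    refine ⟨z, List.mem_cons_of_mem a hz₁, ?_, fun y hy => ?_⟩
    · simp [hz₂, haz.ne']
    · simp [hz y hy]
  | @rel a b l₁ l₂ hab =>
    rw [List.pairwise_cons] at h₁ h₂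
    refine ⟨a, List.mem_cons_self, ?_, fun y hy => iff_of_false ?_ ?_⟩
    · simp only [List.mem_cons, not_or]
      exact ⟨hab.ne, fun ha => lt_asymm hab (h₂.1 a ha)⟩
    · simp only [List.mem_cons, not_or]
      exact ⟨hy.ne, fun h => lt_asymm hy (h₁.1 y h)⟩
    · simp only [List.mem_cons, not_or]
      exact ⟨(hy.trans hab).ne, fun h => lt_asymm (hy.trans hab) (h₂.1 y h)⟩

theorem lexPrecedes_of_lex_sort {A B : Finset α} (hcard : #A = #B)
    (h : List.Lex (· < ·) (A.sort (· ≤ ·)) (B.sort (· ≤ ·))) : LexPrecedes A B := by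
  obtain ⟨z, hzA, hzB, hz⟩ := List.exists_first_diff_of_lex h (sortedLT_sort A).pairwise
    (sortedLT_sort B).pairwise (by simpa using hcard)
  exact ⟨z, by simpa using hzA, by simpa using hzB, fun y hy => by simpa using hz y hy⟩

theorem LexPrecedes.agreeBelow_and_lt_of_erase [DecidableEq α] {A B : Finset α} {a b : α}
    (hAB : LexPrecedes A B) (hb : b ∈ B) (hBA : LexPrecedes (B.erase b) (A.erase a)) :
    AgreeBelow A B a ∧ a < b := by
  obtain ⟨z, hzA, hzB, hz⟩ := hAB
  obtain ⟨x, hxB, hxA, hx⟩ := hBA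
  have hb_low : ¬ (b < z ∧ b < x ∧ b ≠ a) := fun ⟨hbz, hbx, hba⟩ =>
    notMem_erase b B ((hx b hbx).mpr (mem_erase.mpr ⟨hba, (hz b hbz).mpr hb⟩))
  rcases lt_trichotomy z x with hzx | rfl | hxz
  · obtain rfl : z = a := by
      by_contra hza
      exact hzB (mem_of_mem_erase ((hx z hzx).mpr (mem_erase.mpr ⟨hza, hzA⟩)))
    refine ⟨hz, lt_of_not_ge fun hbz => ?_⟩
    rcases hbz.lt_or_eq with hbz | rfl
    · exact hb_low ⟨hbz, hbz.trans hzx, hbz.ne⟩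
    · exact hzB hb
  · exact (hzB (mem_of_mem_erase hxB)).elim
  · have hxA' : x ∈ A := (hz x hxz).mpr (mem_of_mem_erase hxB)
    obtain rfl : x = a := by
      by_contra hxa
      exact hxA (mem_erase.mpr ⟨hxa, hxA'⟩)
    refine ⟨hz.mono hxz.le, lt_of_not_ge fun hbx => ?_⟩
    rcases hbx.lt_or_eq with hbx | rfl
    · exact hb_low ⟨hbx.trans hxz, hbx, hbx.ne⟩
    · exact ne_of_mem_erase hxB rfl

end LexPrecedes

theorem List.lex_of_lex_zipWith_sub {α : Type*} [AddCommGroup α] [LinearOrder α]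
    [IsOrderedAddMonoid α] {c : α} :
    ∀ {a : α} {xs ys : List α}, xs.length = ys.length →
      List.Lex (· < ·) (List.zipWith (fun u v => u - v) (xs ++ [c]) (a :: xs))
        (List.zipWith (fun u v => u - v) (ys ++ [c]) (a :: ys)) →
      List.Lex (· < ·) xs ys
  | _, [], [], _, h => absurd h (List.lex_irrefl lt_irrefl _)
  | a, x :: xs, y :: ys, hlen, h => by
    simp only [List.cons_append, List.zipWith_cons_cons, List.cons_lex_cons_iff,
      sub_lt_sub_iff_right, sub_left_inj] at h
    rcases h with h | ⟨rfl, h⟩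
    · exact List.Lex.rel h
    · exact List.Lex.cons (List.lex_of_lex_zipWith_sub (by simpa using hlen) h)

theorem cw_nonneg (p q : Angle) : 0 ≤ cw p q := by
  have := (q - p).toReal_mem_Ioc
  unfold cw
  split_ifs <;> linarith [pi_pos, this.1]

theorem cw_lt_two_pi (p q : Angle) : cw p q < 2 * π := by
  have := (q - p).toReal_mem_Ioc
  unfold cw
  split_ifs <;> linarith [pi_pos, this.2]

theorem coe_cw (p q : Angle) : (cw p q : Angle) = q - p := by
  unfold cw
  split_ifs
  · exact Angle.coe_toReal _
  · rw [Angle.coe_add, Angle.coe_two_pi, add_zero, Angle.coe_toReal]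

theorem cw_eq_iff {p q : Angle} {x : ℝ} (hx₀ : 0 ≤ x) (hx : x < 2 * π) :
    cw p q = x ↔ (x : Angle) = q - p := by
  refine ⟨fun h => h ▸ coe_cw p q, fun h => ?_⟩
  obtain ⟨k, hk⟩ := Angle.angle_eq_iff_two_pi_dvd_sub.mp ((coe_cw p q).trans h.symm)
  have h₀ := cw_nonneg p q
  have h₁ := cw_lt_two_pi p q
  have hk₀ : k = 0 := by
    have hk_lt : (k : ℝ) < 1 := by nlinarith [pi_pos]
    have hk_gt : (-1 : ℝ) < k := by nlinarith [pi_pos]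
    have : k < 1 := by exact_mod_cast hk_lt
    have : -1 < k := by exact_mod_cast hk_gt
    omega
  simp only [hk₀, Int.cast_zero, mul_zero, sub_eq_zero] at hk
  exact hk

theorem cw_injective (p : Angle) : Function.Injective (cw p) := fun q₁ q₂ h =>
  sub_left_injective ((coe_cw p q₁).symm.trans (h ▸ coe_cw p q₂))

theorem cw_antipode (p : Angle) : cw p (antipode p) = π := by
  rw [cw_eq_iff pi_pos.le (by linarith [pi_pos]), antipode, add_sub_cancel_left]

theorem mem_image_cw {T : Finset Angle} {p : Angle} {y : ℝ} :
    y ∈ T.image (cw p) ↔ 0 ≤ y ∧ y < 2 * π ∧ p + y ∈ T := by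
  simp only [mem_image]
  constructor
  · rintro ⟨q, hq, rfl⟩
    exact ⟨cw_nonneg p q, cw_lt_two_pi p q, by rwa [coe_cw, add_sub_cancel]⟩
  · rintro ⟨hy₀, hy, hT⟩
    exact ⟨p + y, hT, (cw_eq_iff hy₀ hy).mpr (add_sub_cancel_left p y).symm⟩

theorem cw_lt_pi_of_pi_lt_cw_add_pi {p q : Angle} (h : π < cw p (q + π)) : cw p q < π := by
  by_contra! hpi
  have hcw : cw p (q + π) = cw p q - π := by
    rw [cw_eq_iff (by linarith) (by linarith [cw_lt_two_pi p q, pi_pos]), Angle.coe_sub,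
      coe_cw, ← Angle.sub_coe_pi_eq_add_coe_pi]
    abel
  linarith [cw_lt_two_pi p q]

/-- The first disagreement `z` of `p` with `p - t` becomes the disagreement `z - t` of `p + t`
with `p`. -/
theorem lexPrecedes_image_cw_add {T : Finset Angle} {p : Angle} {t : ℝ} (ht : 0 ≤ t)
    (h : LexPrecedes (T.image (cw p)) (T.image (cw (p - t))))
    (hagree : AgreeBelow (T.image (cw p)) (T.image (cw (p - t))) t) :
    LexPrecedes (T.image (cw (p + t))) (T.image (cw p)) := by
  obtain ⟨z, hzA, hzB, hz⟩ := h
  have htz : t ≤ z := le_of_not_gt fun hzt => hzB ((hagree z hzt).mp hzA)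
  rw [mem_image_cw] at hzA hzB
  refine ⟨z - t, ?_, ?_, fun y hy => ?_⟩
  · rw [mem_image_cw, Angle.coe_sub, add_add_sub_cancel]
    exact ⟨by linarith, by linarith, hzA.2.2⟩
  · rw [mem_image_cw]
    rintro ⟨-, -, hT⟩
    refine hzB ⟨hzA.1, hzA.2.1, ?_⟩
    rwa [Angle.coe_sub, ← add_sub_assoc, add_sub_right_comm] at hT
  · by_cases hy₀ : 0 ≤ y
    · have hyz := hz (y + t) (by linarith)
      simp only [mem_image_cw, Angle.coe_add] at hyz ⊢
      rw [show p - (t : Angle) + (y + t) = p + y by abel, ← add_assoc] at hyz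
      rw [add_right_comm]
      constructor
      · rintro ⟨-, -, h⟩
        exact ⟨hy₀, by linarith, (hyz.mp ⟨by linarith, by linarith, h⟩).2.2⟩
      · rintro ⟨-, -, h⟩
        exact ⟨hy₀, by linarith, (hyz.mpr ⟨by linarith, by linarith, h⟩).2.2⟩
    · simp only [mem_image_cw, hy₀, false_and]

theorem dists_eq_zero_cons {T : Finset Angle} {p : Angle} (hp : p ∈ T) :
    ∃ l, dists T p = 0 :: l := by
  have h₀ : (0 : ℝ) ∈ dists T p := by
    rw [dists, mem_sort, mem_image_cw]
    simpa using ⟨by positivity, hp⟩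
  have hsorted : (dists T p).Pairwise (· ≤ ·) := pairwise_sort _ _
  cases hd : dists T p with
  | nil => simp [hd] at h₀
  | cons a l =>
    rw [hd] at h₀ hsorted
    have ha₀ : 0 ≤ a := by
      have : a ∈ dists T p := hd ▸ List.mem_cons_self
      exact (mem_image_cw.mp ((mem_sort _).mp this)).1
    have ha : a ≤ 0 := by
      rcases List.mem_cons.mp h₀ with h | h
      · exact h.ge
      · exact (List.pairwise_cons.mp hsorted).1 0 h
    exact ⟨l, by rw [le_antisymm ha ha₀]⟩

theorem lexPrecedes_of_lexLt_gapSeq {T : Finset Angle} {p q : Angle} (hp : p ∈ T) (hq : q ∈ T)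
    (h : lexLt (gapSeq T p) (gapSeq T q)) :
    LexPrecedes (T.image (cw p)) (T.image (cw q)) := by
  have hcard : #(T.image (cw p)) = #(T.image (cw q)) := by
    rw [card_image_of_injective _ (cw_injective p), card_image_of_injective _ (cw_injective q)]
  obtain ⟨lp, hlp⟩ := dists_eq_zero_cons hp
  obtain ⟨lq, hlq⟩ := dists_eq_zero_cons hq
  have hlen : lp.length = lq.length := by
    have hp' := congrArg List.length hlp
    have hq' := congrArg List.length hlq
    simp only [dists, length_sort, List.length_cons] at hp' hq'
    omega
  refine lexPrecedes_of_lex_sort hcard ?_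
  change List.Lex _ (dists T p) (dists T q)
  rw [lexLt, gapSeq, gapSeq, hlp, hlq, List.tail_cons, List.tail_cons] at h
  rw [hlp, hlq]
  exact List.Lex.cons (List.lex_of_lex_zipWith_sub hlen h)

theorem TrueLeader.lexPrecedes {T : Finset Angle} {p q : Angle} (h : TrueLeader T p)
    (hq : q ∈ T) (hqp : q ≠ p) : LexPrecedes (T.image (cw p)) (T.image (cw q)) :=
  lexPrecedes_of_lexLt_gapSeq h.1 hq (h.2 q hq hqp)

theorem TrueLeader.not_trueLeader_of_ne {T : Finset Angle} {L r : Angle} (hL : TrueLeader T L)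
    (hrL : r ≠ L) : ¬ TrueLeader T r := fun hr =>
  (hL.lexPrecedes hr.1 hrL).not_lexPrecedes (hr.lexPrecedes hL.1 hrL.symm)

theorem TrueLeader.not_trueLeader_insert_antipode {S : Finset Angle} {L r : Angle}
    (hL : TrueLeader S L) (hr : r ∈ S) (hrL : r ≠ L) (ha : antipode r ∉ S) :
    ¬ TrueLeader (insert (antipode r) S) r := by
  intro hrT
  set T := insert (antipode r) S
  have hTL := hrT.lexPrecedes (mem_insert_of_mem hL.1) hrL.symm
  have hSL : LexPrecedes ((T.image (cw L)).erase (cw L (antipode r)))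
      ((T.image (cw r)).erase π) := by
    have := hL.lexPrecedes hr hrL
    rwa [← erase_insert ha, image_erase (cw_injective L), image_erase (cw_injective r),
      cw_antipode] at this
  obtain ⟨hagree, hlt⟩ :=
    hTL.agreeBelow_and_lt_of_erase (mem_image_of_mem _ (mem_insert_self _ _)) hSL
  set t := cw L r
  have ht : t < π := cw_lt_pi_of_pi_lt_cw_add_pi hlt
  have hrt : r - (t : Angle) = L := by rw [coe_cw, sub_sub_cancel]
  have hq : r + t ∈ T := (mem_image_cw.mp ((hagree t ht).mpr (mem_image_of_mem _ hrT.1))).2.2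
  have hrot := lexPrecedes_image_cw_add (cw_nonneg L r) (by rwa [hrt])
    (by rw [hrt]; exact hagree.mono ht.le)
  by_cases hqr : r + t = r
  · rw [hqr] at hrot
    exact LexPrecedes.irrefl _ hrot
  · exact hrot.not_lexPrecedes (hrT.lexPrecedes hq hqr)

theorem stmt6_general (S : Finset Real.Angle)
    (L : Real.Angle) (hL : TrueLeader S L)
    (r : Real.Angle) (hr : r ∈ S) (hrL : r ≠ L)
    (hxor : Xor' (TrueLeader (C0 S r) r) (TrueLeader (C1 S r) r)) :
    TrueLeader (C0 S r) r ∧ ¬ TrueLeader (C1 S r) r := by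
  have hC1 : ¬ TrueLeader (C1 S r) r := by
    by_cases ha : antipode r ∈ S
    · rw [C1, insert_eq_of_mem ha]
      exact hL.not_trueLeader_of_ne hrL
    · exact hL.not_trueLeader_insert_antipode hr hrL ha
  exact ⟨hxor.elim And.left fun h => absurd h.1 hC1, hC1⟩

theorem stmt6 (S : Finset Real.Angle) (hasym : RotAsym S)
    (L : Real.Angle) (hL : TrueLeader S L)
    (r : Real.Angle) (hr : r ∈ S) (hrL : r ≠ L)
    (h0 : RotAsym (C0 S r)) (h1 : RotAsym (C1 S r))
    (hxor : Xor' (TrueLeader (C0 S r) r) (TrueLeader (C1 S r) r)) :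
    TrueLeader (C0 S r) r ∧ ¬ TrueLeader (C1 S r) r :=
  stmt6_general S L hL r hr hrL hxor
end
end
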